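/- Assume A(x,y) > 0 for all x, y ∈ Ω∪Ω_δ, all quadrature weights ω_{j,i} are positive, 0 < h < δ, and χ_h ∩ Ω ≠ ∅. (i) If v : χ_h → ℝ satisfies (ℒ_h^δ v)(x_i) ≥ 0 for all x_i ∈ χ_h ∩ Ω, then χ_h ∩ Ω_δ ≠ ∅ and max_{x_i ∈ χ_h ∩ Ω} v(x_i) ≤ max_{x_i ∈ χ_h ∩ Ω_δ} v(x_i). (ii) If v satisfies (ℒ_h^δ v)(x_i) ≤ 0 for all x_i ∈ χ_h ∩ Ω, then min_{x_i ∈ χ_h ∩ Ω} v(x_i) ≥ min_{x_i ∈ χ_h ∩ Ω_δ} v(x_i) (discrete maximum/minimum principle). -/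

import Mathlib

open MeasureTheory Metric Set Filter

noncomputable section

/-- Euclidean space ℝ^d. -/
abbrev Eu (d : ℕ) : Type := EuclideanSpace ℝ (Fin d)

/-- The nonlocal boundary collar Ω_δ = {x ∉ Ω : dist(x, ∂Ω) < δ}. -/
def NLcollar (d : ℕ) (Ω : Set (Eu d)) (δ : ℝ) : Set (Eu d) :=
  {x | x ∉ Ω ∧ Metric.infDist x (frontier Ω) < δ}

/-- The extended domain Ω ∪ Ω_δ. -/
def NLdom (d : ℕ) (Ω : Set (Eu d)) (δ : ℝ) : Set (Eu d) := Ω ∪ NLcollar d Ω δ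

/-- The uniform Cartesian grid hℤ^d in ℝ^d. -/
def gridSet (d : ℕ) (h : ℝ) : Set (Eu d) := {x | ∀ i, ∃ k : ℤ, x i = (k : ℝ) * h}

/-- The meshfree grid set χ_h = (hℤ^d) ∩ (Ω ∪ Ω_δ). -/
def chi (d : ℕ) (Ω : Set (Eu d)) (δ h : ℝ) : Set (Eu d) :=
  gridSet d h ∩ NLdom d Ω δ

/-- The singular kernel γ_δ(r) = D₀ / (δ^{d+2-s} r^s) for 0 < r ≤ δ, zero otherwise. -/
def gamK (d : ℕ) (s D₀ δ r : ℝ) : ℝ :=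
  if 0 < r ∧ r ≤ δ then D₀ / (δ ^ ((d : ℝ) + 2 - s) * r ^ s) else 0

/-- The discrete nonlocal diffusion operator ℒ_h^δ. -/
def Lh (d : ℕ) (Ω : Set (Eu d)) (δ h s D₀ : ℝ)
    (A ω : Eu d → Eu d → ℝ) (v : Eu d → ℝ) (xi : Eu d) : ℝ :=
  2 * ∑ᶠ xj ∈ {y | y ∈ chi d Ω δ h ∧ y ∈ ball xi δ ∧ y ≠ xi},
        A xi xj * gamK d s D₀ δ (dist xi xj) * (v xj - v xi) * ω xj xi

/-- The continuum nonlocal diffusion operator ℒ^δ. -/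
def Lc (d : ℕ) (δ s D₀ : ℝ) (A : Eu d → Eu d → ℝ) (u : Eu d → ℝ) (x : Eu d) : ℝ :=
  2 * ∫ y in ball x δ, A x y * gamK d s D₀ δ (dist x y) * (u y - u x)

/-- The third-order polynomial reproducing property of the quadrature weights ω. -/
def Reproduces3 (d : ℕ) (Ω : Set (Eu d)) (δ h s D₀ : ℝ) (ω : Eu d → Eu d → ℝ) : Prop :=
  ∀ p : MvPolynomial (Fin d) ℝ, p.totalDegree ≤ 3 → ∀ xi ∈ chi d Ω δ h ∩ Ω,
    (∑ᶠ xj ∈ {y | y ∈ chi d Ω δ h ∧ y ∈ ball xi δ ∧ y ≠ xi},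
        MvPolynomial.eval (fun i => xj i - xi i) p * gamK d s D₀ δ (dist xj xi) * ω xj xi)
      = ∫ y in ball xi δ, MvPolynomial.eval (fun i => y i - xi i) p * gamK d s D₀ δ (dist y xi)

/-! A maximiser `x` of `v` over the whole grid `χ_h` that lies in `Ω` has `ℒ_h^δ v(x) ≤ 0`,
every term of the sum being `≤ 0`; if also `ℒ_h^δ v(x) ≥ 0`, all terms vanish, so by positivity
of `A`, `γ_δ` and `ω` every grid neighbour within `δ` is again a maximiser. Starting from a grid
maximiser in `Ω` and stepping by `h e₁` with `h < δ`, one stays in `χ_h` (a step leaving `Ω`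
lands within `h` of `∂Ω`, i.e. in `Ω_δ`), and since `Ω` is bounded one eventually leaves `Ω`:
the maximum is attained in `Ω_δ`. The minimum principle is the maximum principle for `-v`. -/

lemma gamK_pos {d : ℕ} {s D₀ δ r : ℝ} (hD₀ : 0 < D₀) (hr : 0 < r) (hrδ : r ≤ δ) :
    0 < gamK d s D₀ δ r := by
  rw [gamK, if_pos ⟨hr, hrδ⟩]
  have := Real.rpow_pos_of_pos (hr.trans_le hrδ) ((d : ℝ) + 2 - s)
  have := Real.rpow_pos_of_pos hr s
  positivity

lemma infDist_frontier_le_dist {E : Type*} [NormedAddCommGroup E] [NormedSpace ℝ E]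
    {Ω : Set E} (hΩ : IsOpen Ω) {x y : E} (hx : x ∈ Ω) (hy : y ∉ Ω) :
    infDist y (frontier Ω) ≤ dist x y := by
  obtain ⟨z, hz, hzΩ⟩ : (segment ℝ x y ∩ frontier Ω).Nonempty := by
    by_contra! hcon
    refine hy ((convex_segment x y).isPreconnected.subset_of_closure_inter_subset hΩ
      ⟨x, left_mem_segment ℝ x y, hx⟩ ?_ (right_mem_segment ℝ x y))
    intro w ⟨hwcl, hws⟩
    by_contra hwΩ
    exact (Set.eq_empty_iff_forall_notMem.1 hcon w) ⟨hws, hΩ.frontier_eq ▸ ⟨hwcl, hwΩ⟩⟩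
  calc infDist y (frontier Ω) ≤ dist y z := infDist_le_dist_of_mem hzΩ
    _ ≤ dist x z + dist z y := by rw [dist_comm y z]; exact le_add_of_nonneg_left dist_nonneg
    _ = dist x y := dist_add_dist_of_mem_segment hz

lemma Bornology.IsBounded.exists_first_add_nsmul_notMem {E : Type*} [NormedAddCommGroup E]
    [NormedSpace ℝ E] {s : Set E} (hs : Bornology.IsBounded s) (x : E) {e : E} (he : e ≠ 0) :
    ∃ N : ℕ, x + N • e ∉ s ∧ ∀ k < N, x + k • e ∈ s := by
  classical
  have hexit : ∃ N : ℕ, x + N • e ∉ s := by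
    obtain ⟨r, hr⟩ := hs.subset_closedBall x
    obtain ⟨N, hN⟩ := exists_nat_gt (r / ‖e‖)
    refine ⟨N, fun hmem => ?_⟩
    have hle := mem_closedBall.1 (hr hmem)
    rw [dist_self_add_left, RCLike.norm_nsmul ℝ, nsmul_eq_mul] at hle
    rw [div_lt_iff₀ (norm_pos_iff.2 he)] at hN
    linarith
  exact ⟨Nat.find hexit, Nat.find_spec hexit, fun k hk => not_not.1 (Nat.find_min hexit hk)⟩

lemma add_single_mem_gridSet {d : ℕ} {h : ℝ} {x : Eu d} (hx : x ∈ gridSet d h) (i₀ : Fin d) :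
    x + EuclideanSpace.single i₀ h ∈ gridSet d h := by
  intro i
  obtain ⟨k, hk⟩ := hx i
  refine ⟨if i = i₀ then k + 1 else k, ?_⟩
  rw [PiLp.add_apply, hk, PiLp.single_apply]
  split <;> push_cast <;> ring

lemma mem_chi_of_dist_lt {d : ℕ} {Ω : Set (Eu d)} (hΩ : IsOpen Ω) {δ h : ℝ} {x y : Eu d}
    (hx : x ∈ Ω) (hy : y ∈ gridSet d h) (hxy : dist x y < δ) : y ∈ chi d Ω δ h := by
  refine ⟨hy, ?_⟩
  by_cases hyΩ : y ∈ Ω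
  · exact Or.inl hyΩ
  · exact Or.inr ⟨hyΩ, (infDist_frontier_le_dist hΩ hx hyΩ).trans_lt hxy⟩

lemma Lh_neg {d : ℕ} {Ω : Set (Eu d)} {δ h s D₀ : ℝ} (hfin : (chi d Ω δ h).Finite)
    (A ω : Eu d → Eu d → ℝ) (v : Eu d → ℝ) (x : Eu d) :
    Lh d Ω δ h s D₀ A ω (fun y => -v y) x = -Lh d Ω δ h s D₀ A ω v x := by
  have hS : {y | y ∈ chi d Ω δ h ∧ y ∈ ball x δ ∧ y ≠ x}.Finite := hfin.subset fun _ hy => hy.1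
  simp only [Lh, ← mul_neg, ← finsum_mem_neg_distrib _ hS]
  congr 1
  exact finsum_mem_congr rfl fun _ _ => by ring

section MaximumPropagation

variable {d : ℕ} {Ω : Set (Eu d)} {δ h s D₀ : ℝ} {A ω : Eu d → Eu d → ℝ} {v : Eu d → ℝ}

lemma eq_of_isMaxOn_of_Lh_nonneg (hD₀ : 0 < D₀) (hfin : (chi d Ω δ h).Finite)
    (hApos : ∀ x ∈ NLdom d Ω δ, ∀ y ∈ NLdom d Ω δ, 0 < A x y)
    (hωpos : ∀ x ∈ chi d Ω δ h, ∀ y ∈ chi d Ω δ h, 0 < ω x y)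
    {x : Eu d} (hx : x ∈ chi d Ω δ h) (hmax : IsMaxOn v (chi d Ω δ h) x)
    (hL : 0 ≤ Lh d Ω δ h s D₀ A ω v x)
    {y : Eu d} (hy : y ∈ chi d Ω δ h) (hxy : dist x y < δ) (hyx : y ≠ x) :
    v y = v x := by
  set S := {z | z ∈ chi d Ω δ h ∧ z ∈ ball x δ ∧ z ≠ x}
  have hS : S.Finite := hfin.subset fun _ hz => hz.1
  have hcoef : ∀ z ∈ S, 0 < A x z * gamK d s D₀ δ (dist x z) * ω z x := fun z hz =>
    mul_pos (mul_pos (hApos x hx.2 z hz.1.2)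
      (gamK_pos hD₀ (dist_pos.2 hz.2.2.symm) (mem_ball'.1 hz.2.1).le)) (hωpos z hz.1 x hx)
  have hterm : ∀ z ∈ hS.toFinset,
      A x z * gamK d s D₀ δ (dist x z) * (v z - v x) * ω z x ≤ 0 := fun z hz => by
    rw [hS.mem_toFinset] at hz
    have := mul_nonpos_of_nonneg_of_nonpos (hcoef z hz).le (sub_nonpos.2 (hmax hz.1))
    linarith
  have hyS : y ∈ S := ⟨hy, mem_ball'.2 hxy, hyx⟩
  rw [Lh, finsum_mem_eq_finite_toFinset_sum _ hS] at hL
  have hzero := (Finset.sum_eq_zero_iff_of_nonpos hterm).1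
    (le_antisymm (Finset.sum_nonpos hterm) (by linarith)) y (hS.mem_toFinset.2 hyS)
  have : (A x y * gamK d s D₀ δ (dist x y) * ω y x) * (v y - v x) = 0 := by
    linear_combination hzero
  exact sub_eq_zero.1 ((mul_eq_zero.1 this).resolve_left (hcoef y hyS).ne')

lemma isMaxOn_add_single_of_Lh_nonneg (hΩ : IsOpen Ω) (hh : 0 < h) (hhδ : h < δ)
    (hD₀ : 0 < D₀) (hfin : (chi d Ω δ h).Finite)
    (hApos : ∀ x ∈ NLdom d Ω δ, ∀ y ∈ NLdom d Ω δ, 0 < A x y)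
    (hωpos : ∀ x ∈ chi d Ω δ h, ∀ y ∈ chi d Ω δ h, 0 < ω x y)
    {x : Eu d} (hx : x ∈ chi d Ω δ h) (hxΩ : x ∈ Ω) (hmax : IsMaxOn v (chi d Ω δ h) x)
    (hL : 0 ≤ Lh d Ω δ h s D₀ A ω v x) (i₀ : Fin d) :
    x + EuclideanSpace.single i₀ h ∈ chi d Ω δ h ∧
      IsMaxOn v (chi d Ω δ h) (x + EuclideanSpace.single i₀ h) := by
  have hdist : dist x (x + EuclideanSpace.single i₀ h) = h := by
    rw [dist_comm, dist_self_add_left, PiLp.norm_single, Real.norm_of_nonneg hh.le]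
  have hlt := hdist.trans_lt hhδ
  have hy := mem_chi_of_dist_lt hΩ hxΩ (add_single_mem_gridSet hx.1 i₀) hlt
  have hyx : x + EuclideanSpace.single i₀ h ≠ x := by
    intro hyx
    rw [hyx, dist_self] at hdist
    exact hh.ne hdist
  refine ⟨hy, fun z hz => ?_⟩
  show v z ≤ _
  rw [eq_of_isMaxOn_of_Lh_nonneg hD₀ hfin hApos hωpos hx hmax hL hy hlt hyx]
  exact hmax hz

lemma exists_isMaxOn_mem_collar (hd : 1 ≤ d) (hΩ : IsOpen Ω) (hΩbdd : Bornology.IsBounded Ω)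
    (hh : 0 < h) (hhδ : h < δ) (hD₀ : 0 < D₀) (hfin : (chi d Ω δ h).Finite)
    (hApos : ∀ x ∈ NLdom d Ω δ, ∀ y ∈ NLdom d Ω δ, 0 < A x y)
    (hωpos : ∀ x ∈ chi d Ω δ h, ∀ y ∈ chi d Ω δ h, 0 < ω x y)
    (hne : (chi d Ω δ h ∩ Ω).Nonempty)
    (hL : ∀ x ∈ chi d Ω δ h ∩ Ω, 0 ≤ Lh d Ω δ h s D₀ A ω v x) :
    ∃ x ∈ chi d Ω δ h ∩ NLcollar d Ω δ, IsMaxOn v (chi d Ω δ h) x := by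
  obtain ⟨x₀, hx₀, hmax₀⟩ := (chi d Ω δ h).exists_max_image v hfin (hne.mono inter_subset_left)
  set e := EuclideanSpace.single (⟨0, hd⟩ : Fin d) h
  have he : e ≠ 0 := by simpa [e] using hh.ne'
  obtain ⟨N, hNΩ, hkΩ⟩ := hΩbdd.exists_first_add_nsmul_notMem x₀ he
  have hwalk : ∀ k ≤ N, x₀ + k • e ∈ chi d Ω δ h ∧ IsMaxOn v (chi d Ω δ h) (x₀ + k • e) := by
    intro k
    induction k with
    | zero => intro _; simpa using ⟨hx₀, hmax₀⟩
    | succ k ih =>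
      intro hk
      obtain ⟨hxk, hmaxk⟩ := ih (Nat.le_of_succ_le hk)
      have hxkΩ := hkΩ k hk
      rw [succ_nsmul, ← add_assoc]
      exact isMaxOn_add_single_of_Lh_nonneg hΩ hh hhδ hD₀ hfin hApos hωpos hxk hxkΩ hmaxk
        (hL _ ⟨hxk, hxkΩ⟩) _
  obtain ⟨hxN, hmaxN⟩ := hwalk N le_rfl
  exact ⟨_, ⟨hxN, hxN.2.resolve_left hNΩ⟩, hmaxN⟩

end MaximumPropagation

theorem discrete_max_min_principle_general
    (d : ℕ) (hd : 1 ≤ d) (Ω : Set (Eu d))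
    (hΩopen : IsOpen Ω) (hΩbdd : Bornology.IsBounded Ω)
    (δ : ℝ) (h : ℝ) (hh : 0 < h) (hhδ : h < δ)
    (s : ℝ)
    (D₀ : ℝ) (hD₀ : 0 < D₀)
    (hfin : (chi d Ω δ h).Finite)
    (A ω : Eu d → Eu d → ℝ)
    (hApos : ∀ x ∈ NLdom d Ω δ, ∀ y ∈ NLdom d Ω δ, 0 < A x y)
    (hωpos : ∀ x ∈ chi d Ω δ h, ∀ y ∈ chi d Ω δ h, 0 < ω x y)
    (hne : (chi d Ω δ h ∩ Ω).Nonempty)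
    (v : Eu d → ℝ) :
    ((∀ xi ∈ chi d Ω δ h ∩ Ω, 0 ≤ Lh d Ω δ h s D₀ A ω v xi) →
      (chi d Ω δ h ∩ NLcollar d Ω δ).Nonempty ∧
      sSup (v '' (chi d Ω δ h ∩ Ω)) ≤ sSup (v '' (chi d Ω δ h ∩ NLcollar d Ω δ))) ∧
    ((∀ xi ∈ chi d Ω δ h ∩ Ω, Lh d Ω δ h s D₀ A ω v xi ≤ 0) →
      (chi d Ω δ h ∩ NLcollar d Ω δ).Nonempty ∧
      sInf (v '' (chi d Ω δ h ∩ NLcollar d Ω δ)) ≤ sInf (v '' (chi d Ω δ h ∩ Ω))) := by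
  have hcollar : (v '' (chi d Ω δ h ∩ NLcollar d Ω δ)).Finite :=
    (hfin.subset inter_subset_left).image v
  constructor
  · intro hL
    obtain ⟨x, hx, hmax⟩ :=
      exists_isMaxOn_mem_collar hd hΩopen hΩbdd hh hhδ hD₀ hfin hApos hωpos hne hL
    refine ⟨⟨x, hx⟩, ?_⟩
    calc sSup (v '' (chi d Ω δ h ∩ Ω)) ≤ v x :=
          csSup_le (hne.image v) (forall_mem_image.2 fun y hy => hmax hy.1)
      _ ≤ _ := le_csSup hcollar.bddAbove (mem_image_of_mem v hx)
  · intro hL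
    obtain ⟨x, hx, hmax⟩ := exists_isMaxOn_mem_collar (v := fun y => -v y) hd hΩopen hΩbdd hh
      hhδ hD₀ hfin hApos hωpos hne fun y hy => by rw [Lh_neg hfin]; linarith [hL y hy]
    have hmin : IsMinOn v (chi d Ω δ h) x := by simpa using hmax.neg
    refine ⟨⟨x, hx⟩, ?_⟩
    calc sInf (v '' (chi d Ω δ h ∩ NLcollar d Ω δ)) ≤ v x :=
          csInf_le hcollar.bddBelow (mem_image_of_mem v hx)
      _ ≤ _ := le_csInf (hne.image v) (forall_mem_image.2 fun y hy => hmin hy.1)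

/-- Discrete maximum/minimum principle for the discrete nonlocal operator ℒ_h^δ with
positive coefficient and positive quadrature weights: (i) if ℒ_h^δ v ≥ 0 on χ_h ∩ Ω
then χ_h ∩ Ω_δ ≠ ∅ and max_{χ_h∩Ω} v ≤ max_{χ_h∩Ω_δ} v; (ii) if ℒ_h^δ v ≤ 0 on
χ_h ∩ Ω then min_{χ_h∩Ω} v ≥ min_{χ_h∩Ω_δ} v. -/
theorem discrete_max_min_principle
    (d : ℕ) (hd : 1 ≤ d) (Ω : Set (Eu d))
    (hΩopen : IsOpen Ω) (hΩbdd : Bornology.IsBounded Ω) (hΩconn : IsConnected Ω)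
    (δ : ℝ) (hδ : 0 < δ) (h : ℝ) (hh : 0 < h) (hhδ : h < δ)
    (s : ℝ) (hs0 : 0 ≤ s) (hsd : s < (d : ℝ))
    (D₀ : ℝ) (hD₀ : 0 < D₀)
    (hnorm : (∫ z in ball (0 : Eu d) δ, gamK d s D₀ δ ‖z‖ * ‖z‖ ^ 2) = (d : ℝ))
    (hfin : (chi d Ω δ h).Finite)
    (A ω : Eu d → Eu d → ℝ)
    (hApos : ∀ x ∈ NLdom d Ω δ, ∀ y ∈ NLdom d Ω δ, 0 < A x y)
    (hωpos : ∀ x ∈ chi d Ω δ h, ∀ y ∈ chi d Ω δ h, 0 < ω x y)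
    (hne : (chi d Ω δ h ∩ Ω).Nonempty)
    (v : Eu d → ℝ) :
    ((∀ xi ∈ chi d Ω δ h ∩ Ω, 0 ≤ Lh d Ω δ h s D₀ A ω v xi) →
      (chi d Ω δ h ∩ NLcollar d Ω δ).Nonempty ∧
      sSup (v '' (chi d Ω δ h ∩ Ω)) ≤ sSup (v '' (chi d Ω δ h ∩ NLcollar d Ω δ))) ∧
    ((∀ xi ∈ chi d Ω δ h ∩ Ω, Lh d Ω δ h s D₀ A ω v xi ≤ 0) →
      (chi d Ω δ h ∩ NLcollar d Ω δ).Nonempty ∧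
      sInf (v '' (chi d Ω δ h ∩ NLcollar d Ω δ)) ≤ sInf (v '' (chi d Ω δ h ∩ Ω))) :=
  discrete_max_min_principle_general d hd Ω hΩopen hΩbdd δ h hh hhδ s D₀ hD₀ hfin A ω hApos hωpos
    hne v
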